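/- Let f : Ω × ℝ × ℝ^N → [0,∞) be a Carathéodory function convex with respect to the last variable, and h : ℝ^N → [0,∞) convex. If f satisfies the anti-jump condition (H^conv), then so does f + h (i.e. the function (x,t,ξ) ↦ f(x,t,ξ) + h(ξ)). -/

import Mathlib

open MeasureTheory Set

/-- Greatest convex minorant of `φ : ℝ^N → ℝ`: the pointwise supremum of all convex
functions lying below `φ`. -/
noncomputable def gcm {N : ℕ} (φ : EuclideanSpace ℝ (Fin N) → ℝ)
    (ξ : EuclideanSpace ℝ (Fin N)) : ℝ :=
  ⨆ g : {g : EuclideanSpace ℝ (Fin N) → ℝ // ConvexOn ℝ univ g ∧ ∀ x, g x ≤ φ x},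
    g.1 ξ

/-- `f⁻_{B(x,ε)}(t,ξ) = essinf_{y ∈ B(x,ε) ∩ Ω} f(y,t,ξ)`. -/
noncomputable def fminus {N : ℕ} (Ω : Set (EuclideanSpace ℝ (Fin N)))
    (f : EuclideanSpace ℝ (Fin N) → ℝ → EuclideanSpace ℝ (Fin N) → ℝ)
    (x : EuclideanSpace ℝ (Fin N)) (ε t : ℝ) (ξ : EuclideanSpace ℝ (Fin N)) : ℝ :=
  essInf (fun y => f y t ξ) (volume.restrict (Metric.ball x ε ∩ Ω))

/-- The anti-jump condition `(H^conv)` with exponent `p`. -/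
def Hconv {N : ℕ} (Ω : Set (EuclideanSpace ℝ (Fin N)))
    (f : EuclideanSpace ℝ (Fin N) → ℝ → EuclideanSpace ℝ (Fin N) → ℝ) (p : ℝ) : Prop :=
  ∀ k₁ k₂ : ℝ, 0 < k₁ → 0 < k₂ → ∃ C > (0:ℝ),
    ∀ᵐ x ∂(volume.restrict Ω), ∀ t ∈ Ioo (-k₁) k₁, ∀ ξ : EuclideanSpace ℝ (Fin N),
      ∀ ε > (0:ℝ),
        gcm (fminus Ω f x ε t) ξ + ‖ξ‖ ^ (max p (N:ℝ)) ≤ k₂ / ε ^ (N:ℝ) →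
          f x t ξ ≤ C * (gcm (fminus Ω f x ε t) ξ + 1)

/-!
Adding `h(ξ)`, which does not depend on the space variable, shifts the essential infimum:
`(f + h)⁻_B = f⁻_B + h`. Since `h` is convex, `g + h` is a convex minorant of `f⁻_B + h` for every
convex minorant `g` of `f⁻_B`, hence `(f⁻_B)** + h ≤ (f⁻_B + h)**`. So the premise of `(H^conv)`
for `f + h` implies the one for `f`, and `f + h ≤ C ((f⁻_B)** + 1) + h ≤ (C + 1) (((f + h)⁻_B)** + 1)`.
The shift of the essential infimum needs `B(x, ε) ∩ Ω` to have positive measure, which holds for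
almost every `x ∈ Ω` because the support of a measure on `ℝ^N` is conull.
-/

open Filter

section EssInf

variable {α : Type*} [MeasurableSpace α] {μ : Measure α}

/-- Under a nonzero measure a real function cannot exceed every `n : ℕ` almost everywhere,
so the essential lower bounds of any real function are bounded above. -/
lemma isCoboundedUnder_ge_ae_real (hμ : μ ≠ 0) (g : α → ℝ) :
    IsCoboundedUnder (· ≥ ·) (ae μ) g := by
  have : (ae μ).NeBot := ae_neBot.2 hμ
  obtain ⟨n, hn⟩ : ∃ n : ℕ, ∃ᶠ y in ae μ, g y ≤ n := by
    by_contra! h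
    obtain ⟨y, hy⟩ := (ae_all_iff.2 h).exists
    obtain ⟨n, hn⟩ := exists_nat_ge (g y)
    exact (hy n).not_ge hn
  exact IsCoboundedUnder.of_frequently_le hn

lemma essInf_add_const_real (hμ : μ ≠ 0) {g : α → ℝ}
    (hg : IsBoundedUnder (· ≥ ·) (ae μ) g) (c : ℝ) :
    essInf (fun y => g y + c) μ = essInf g μ + c :=
  have : (ae μ).NeBot := ae_neBot.2 hμ
  liminf_add_const _ g c (isCoboundedUnder_ge_ae_real hμ g) hg

lemma le_essInf_real_of_forall_le (hμ : μ ≠ 0) {g : α → ℝ} {c : ℝ} (hg : ∀ y, c ≤ g y) :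
    c ≤ essInf g μ :=
  le_liminf_of_le (isCoboundedUnder_ge_ae_real hμ g) (Eventually.of_forall hg)

end EssInf

lemma ae_restrict_ball_inter_ne_zero {X : Type*} [PseudoMetricSpace X] [MeasurableSpace X]
    [OpensMeasurableSpace X] [HereditarilyLindelofSpace X] (μ : Measure X) (s : Set X) :
    ∀ᵐ x ∂μ.restrict s, ∀ ε > (0 : ℝ), μ.restrict (Metric.ball x ε ∩ s) ≠ 0 := by
  filter_upwards [Measure.support_mem_ae (μ := μ.restrict s)] with x hx ε hε
  rw [← Measure.restrict_restrict Metric.isOpen_ball.measurableSet, Ne, Measure.restrict_eq_zero]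
  exact ((Measure.mem_support_iff_forall x).1 hx _ (Metric.ball_mem_nhds x hε)).ne'

section Gcm

variable {N : ℕ} {φ h : EuclideanSpace ℝ (Fin N) → ℝ}

lemma gcm_bddAbove (φ : EuclideanSpace ℝ (Fin N) → ℝ) (ξ : EuclideanSpace ℝ (Fin N)) :
    BddAbove (range fun g :
      {g : EuclideanSpace ℝ (Fin N) → ℝ // ConvexOn ℝ univ g ∧ ∀ x, g x ≤ φ x} => g.1 ξ) :=
  ⟨φ ξ, by rintro _ ⟨g, rfl⟩; exact g.2.2 ξ⟩

lemma le_gcm_of_forall_le {c : ℝ} (hφ : ∀ x, c ≤ φ x) (ξ : EuclideanSpace ℝ (Fin N)) :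
    c ≤ gcm φ ξ :=
  le_ciSup (gcm_bddAbove φ ξ) ⟨fun _ => c, convexOn_const c convex_univ, hφ⟩

lemma gcm_add_le_gcm_add_of_convexOn (hφ : BddBelow (range φ)) (hh : ConvexOn ℝ univ h)
    (ξ : EuclideanSpace ℝ (Fin N)) : gcm φ ξ + h ξ ≤ gcm (φ + h) ξ := by
  obtain ⟨c, hc⟩ := hφ
  have : Nonempty {g : EuclideanSpace ℝ (Fin N) → ℝ // ConvexOn ℝ univ g ∧ ∀ x, g x ≤ φ x} :=
    ⟨⟨fun _ => c, convexOn_const c convex_univ, fun x => hc (mem_range_self x)⟩⟩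
  rw [← le_sub_iff_add_le]
  refine ciSup_le fun g => le_sub_iff_add_le.2 ?_
  exact le_ciSup (f := fun g : {g // ConvexOn ℝ univ g ∧ ∀ x, g x ≤ (φ + h) x} => g.1 ξ)
    (gcm_bddAbove (φ + h) ξ) ⟨g.1 + h, g.2.1.add hh, fun x => add_le_add_left (g.2.2 x) _⟩

end Gcm

lemma fminus_add_right {N : ℕ} {Ω : Set (EuclideanSpace ℝ (Fin N))}
    {f : EuclideanSpace ℝ (Fin N) → ℝ → EuclideanSpace ℝ (Fin N) → ℝ}
    (hf : ∀ x t ξ, 0 ≤ f x t ξ) (h : EuclideanSpace ℝ (Fin N) → ℝ)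
    {x : EuclideanSpace ℝ (Fin N)} {ε : ℝ} (hε : volume.restrict (Metric.ball x ε ∩ Ω) ≠ 0)
    (t : ℝ) : fminus Ω (fun x t ξ => f x t ξ + h ξ) x ε t = fminus Ω f x ε t + h :=
  funext fun ξ => essInf_add_const_real hε
    (isBoundedUnder_of_eventually_ge (Eventually.of_forall fun y => hf y t ξ)) (h ξ)

theorem stmt11_general {N : ℕ}
    (Ω : Set (EuclideanSpace ℝ (Fin N))) (p : ℝ)
    (f : EuclideanSpace ℝ (Fin N) → ℝ → EuclideanSpace ℝ (Fin N) → ℝ)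
    (hf_nonneg : ∀ x t ξ, 0 ≤ f x t ξ)
    (h : EuclideanSpace ℝ (Fin N) → ℝ)
    (hh_nonneg : ∀ ξ, 0 ≤ h ξ) (hh_conv : ConvexOn ℝ univ h)
    (hH : Hconv Ω f p) :
    Hconv Ω (fun x t ξ => f x t ξ + h ξ) p := by
  intro k₁ k₂ hk₁ hk₂
  obtain ⟨C, hC, hae⟩ := hH k₁ k₂ hk₁ hk₂
  refine ⟨C + 1, by linarith, ?_⟩
  filter_upwards [hae, ae_restrict_ball_inter_ne_zero volume Ω] with x hx hball t ht ξ ε hε hyp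
  rw [fminus_add_right hf_nonneg h (hball ε hε)] at hyp ⊢
  have hφ : ∀ ζ, 0 ≤ fminus Ω f x ε t ζ := fun ζ =>
    le_essInf_real_of_forall_le (hball ε hε) fun y => hf_nonneg y t ζ
  set G := gcm (fminus Ω f x ε t) ξ
  set G' := gcm (fminus Ω f x ε t + h) ξ
  have hG : 0 ≤ G := le_gcm_of_forall_le hφ ξ
  have hGh : G + h ξ ≤ G' :=
    gcm_add_le_gcm_add_of_convexOn ⟨0, by rintro _ ⟨ζ, rfl⟩; exact hφ ζ⟩ hh_conv ξ
  have hf : f x t ξ ≤ C * (G + 1) := hx t ht ξ ε hε (by linarith [hh_nonneg ξ])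
  calc f x t ξ + h ξ ≤ C * (G + 1) + h ξ := by linarith
    _ ≤ (C + 1) * (G' + 1) := by nlinarith [mul_nonneg hC.le (hh_nonneg ξ)]

/-- If a non-negative Carathéodory function `f`, convex in the last
variable, satisfies `(H^conv)`, and `h : ℝ^N → [0,∞)` is convex, then
`(x,t,ξ) ↦ f(x,t,ξ) + h(ξ)` also satisfies `(H^conv)`. -/
theorem stmt11 {N : ℕ}
    (Ω : Set (EuclideanSpace ℝ (Fin N))) (p : ℝ) (hp : 1 ≤ p)
    (f : EuclideanSpace ℝ (Fin N) → ℝ → EuclideanSpace ℝ (Fin N) → ℝ)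
    (hf_nonneg : ∀ x t ξ, 0 ≤ f x t ξ)
    (hf_meas : ∀ t ξ, Measurable fun x => f x t ξ)
    (hf_cont : ∀ᵐ x ∂(volume.restrict Ω),
      Continuous fun q : ℝ × EuclideanSpace ℝ (Fin N) => f x q.1 q.2)
    (hf_conv : ∀ᵐ x ∂(volume.restrict Ω), ∀ t, ConvexOn ℝ univ (f x t))
    (h : EuclideanSpace ℝ (Fin N) → ℝ)
    (hh_nonneg : ∀ ξ, 0 ≤ h ξ) (hh_conv : ConvexOn ℝ univ h)
    (hH : Hconv Ω f p) :
    Hconv Ω (fun x t ξ => f x t ξ + h ξ) p :=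
  stmt11_general Ω p f hf_nonneg h hh_nonneg hh_conv hH
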